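/- arXiv:1712.05662 — 5 statements merged into one kernel-verified Lean document; each statement's English description precedes it below -/
import Mathlib

section
/- Under the standing assumptions, for each t = 1,…,n−1 and each i = 1,…,n, the diagonal blocks Z_{ii} of the inverse A⁻¹ satisfy ‖I‖/(‖A_i‖ + τ_{i−1,t}‖C_{i−1}‖ + ω_{i+1,t}‖B_i‖) ≤ ‖Z_{ii}‖, and moreover, if ‖A_i⁻¹‖⁻¹ − τ_{i−1,t}‖C_{i−1}‖ − ω_{i+1,t}‖B_i‖ > 0, then ‖Z_{ii}‖ ≤ ‖I‖/(‖A_i⁻¹‖⁻¹ − τ_{i−1,t}‖C_{i−1}‖ − ω_{i+1,t}‖B_i‖), where C_0 = B_n = 0 and τ_{0,t} = ω_{n+1,t} = 0. -/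
/-!
Fix a column `i` and write `x j = ‖Z j i‖`. Away from the diagonal, block `(j, i)` of
`T * T⁻¹ = 1`, for `T` the block tridiagonal matrix, gives `x j ≤ ‖A_j⁻¹ B_j‖ * x (j + 1) + ‖A_j⁻¹ C_{j-1}‖ * x (j - 1)`. Eliminating
`x (j - 1)` row by row from the top gives `x j ≤ τ_{j,t} * x (j + 1)` above the diagonal, and
symmetrically from the bottom `x j ≤ ω_{j,t} * x (j - 1)` below it; row dominance keeps every
`τ_{j,t}` and `ω_{j,t}` at most `1`, so the denominators of the recursions stay positive. The
diagonal row `A_i Z_ii + B_i Z_{i+1,i} + C_{i-1} Z_{i-1,i} = 1` then bounds `‖Z_ii‖` from both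
sides by the triangle inequality.
-/

open scoped Matrix
attribute [local instance] Matrix.linftyOpNormedRing

/-- The block tridiagonal matrix with diagonal blocks `A 1, …, A n`, superdiagonal blocks
`B 1, …, B (n-1)` and subdiagonal blocks `C 1, …, C (n-1)`. -/
noncomputable def blockTridiag (n m : ℕ) (A B C : ℕ → Matrix (Fin m) (Fin m) ℂ) :
    Matrix (Fin n × Fin m) (Fin n × Fin m) ℂ :=
  Matrix.of fun p q =>
    if p.1 = q.1 then A ((p.1 : ℕ) + 1) p.2 q.2
    else if (p.1 : ℕ) + 1 = (q.1 : ℕ) then B ((p.1 : ℕ) + 1) p.2 q.2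
    else if (q.1 : ℕ) + 1 = (p.1 : ℕ) then C ((q.1 : ℕ) + 1) p.2 q.2
    else 0

section NormedRing

variable {R : Type*} [NormedRing R]

theorem norm_le_of_mul_add_add_eq_zero {a a' b c x y z : R} (ha : a' * a = 1)
    (h : a * x + (b * y + c * z) = 0) : ‖x‖ ≤ ‖a' * b‖ * ‖y‖ + ‖a' * c‖ * ‖z‖ := by
  have hx : x = -(a' * b * y + a' * c * z) := by
    calc x = a' * (a * x) := by rw [← mul_assoc, ha, one_mul]
      _ = _ := by rw [eq_neg_of_add_eq_zero_left h]; noncomm_ring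
  rw [hx, norm_neg]
  exact (norm_add_le _ _).trans (add_le_add (norm_mul_le _ _) (norm_mul_le _ _))

theorem norm_mul_le_of_eq_zero_or {a x y : R} {s : ℝ} (h : a = 0 ∨ ‖x‖ ≤ s * ‖y‖) :
    ‖a * x‖ ≤ s * ‖a‖ * ‖y‖ := by
  rcases h with rfl | h
  · simp
  · calc ‖a * x‖ ≤ ‖a‖ * ‖x‖ := norm_mul_le _ _
      _ ≤ ‖a‖ * (s * ‖y‖) := by gcongr
      _ = s * ‖a‖ * ‖y‖ := by ring

theorem norm_one_div_le_norm_of_mul_add_eq_one {a x e : R} {δ : ℝ} (h : a * x + e = 1)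
    (he : ‖e‖ ≤ δ * ‖x‖) : ‖(1 : R)‖ / (‖a‖ + δ) ≤ ‖x‖ := by
  have key : ‖(1 : R)‖ ≤ (‖a‖ + δ) * ‖x‖ := by
    calc ‖(1 : R)‖ ≤ ‖a * x‖ + ‖e‖ := h ▸ norm_add_le _ _
      _ ≤ ‖a‖ * ‖x‖ + δ * ‖x‖ := add_le_add (norm_mul_le _ _) he
      _ = (‖a‖ + δ) * ‖x‖ := by ring
  rcases le_or_gt (‖a‖ + δ) 0 with hneg | hpos
  · exact (div_nonpos_of_nonneg_of_nonpos (norm_nonneg _) hneg).trans (norm_nonneg _)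
  · rwa [div_le_iff₀ hpos, mul_comm]

theorem norm_le_norm_one_div_of_mul_add_eq_one {a a' x e : R} {δ : ℝ} (ha : a' * a = 1)
    (h : a * x + e = 1) (he : ‖e‖ ≤ δ * ‖x‖) (hpos : 0 < ‖a'‖⁻¹ - δ) :
    ‖x‖ ≤ ‖(1 : R)‖ / (‖a'‖⁻¹ - δ) := by
  have hax : ‖a'‖⁻¹ * ‖x‖ ≤ ‖a * x‖ := by
    refine inv_mul_le_of_le_mul₀ (norm_nonneg _) (norm_nonneg _) ?_
    calc ‖x‖ = ‖a' * (a * x)‖ := by rw [← mul_assoc, ha, one_mul]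
      _ ≤ ‖a'‖ * ‖a * x‖ := norm_mul_le _ _
  have hax' : ‖a * x‖ ≤ ‖(1 : R)‖ + δ * ‖x‖ := by
    calc ‖a * x‖ = ‖1 - e‖ := by rw [← h, add_sub_cancel_right]
      _ ≤ ‖(1 : R)‖ + ‖e‖ := norm_sub_le _ _
      _ ≤ _ := by linarith
  rw [le_div_iff₀ hpos]
  linarith

end NormedRing

theorem div_one_sub_mul_le_one {b c s : ℝ} (hc : 0 ≤ c) (hc1 : c < 1) (hs : s ≤ 1)
    (hbc : c + b ≤ 1) : b / (1 - c * s) ≤ 1 :=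
  div_le_one_of_le₀ (by nlinarith) (by nlinarith)

theorem le_div_one_sub_mul_of_le_add {x y z b c s : ℝ} (hcs : c * s < 1)
    (hx : x ≤ b * y + c * z) (hz : c * z ≤ c * s * x) : x ≤ b / (1 - c * s) * y := by
  rw [div_mul_eq_mul_div, le_div_iff₀ (by linarith)]
  nlinarith

/-- `b j` and `c j` stand for `‖A_j⁻¹ B_j‖` and `‖A_j⁻¹ C_{j-1}‖`. -/
structure RowDominant (n : ℕ) (b c : ℕ → ℝ) : Prop where
  c_nonneg : ∀ j, 0 ≤ c j
  c_one : c 1 = 0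
  add_le_one : ∀ j, 1 ≤ j → j ≤ n - 1 → c j + b j ≤ 1
  b_pos : ∀ j, 1 ≤ j → j ≤ n - 1 → 0 < b j

theorem RowDominant.c_lt_one {n : ℕ} {b c : ℕ → ℝ} (hd : RowDominant n b c) {j : ℕ}
    (hj : 1 ≤ j) (hjn : j ≤ n - 1) : c j < 1 := by
  linarith [hd.add_le_one j hj hjn, hd.b_pos j hj hjn]

structure TauRecurrence (n : ℕ) (b c : ℕ → ℝ) (τ : ℕ → ℕ → ℝ) : Prop where
  zero : ∀ t, τ 0 t = 0
  one : ∀ j, 1 ≤ j → j ≤ n → τ j 1 = b j / (1 - c j)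
  of_lt : ∀ j t, 1 ≤ j → j ≤ n → 2 ≤ t → t ≤ n - 1 → j < t → τ j t = τ j (t - 1)
  of_le : ∀ j t, 1 ≤ j → j ≤ n → 2 ≤ t → t ≤ n - 1 → t ≤ j →
    τ j t = b j / (1 - c j * τ (j - 1) (t - 1))

namespace TauRecurrence

variable {n : ℕ} {b c : ℕ → ℝ} {τ : ℕ → ℕ → ℝ}

theorem le_one (hτ : TauRecurrence n b c τ) (hd : RowDominant n b c) {t : ℕ} (ht : 1 ≤ t)
    (htn : t ≤ n - 1) {j : ℕ} (hj : j ≤ n - 1) : τ j t ≤ 1 := by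
  rcases Nat.eq_zero_or_pos j with rfl | hj1
  · simp [hτ.zero]
  induction t, ht using Nat.le_induction generalizing j with
  | base =>
    rw [hτ.one j hj1 (by omega), ← mul_one (c j)]
    exact div_one_sub_mul_le_one (hd.c_nonneg j) (hd.c_lt_one hj1 hj) le_rfl
      (hd.add_le_one j hj1 hj)
  | succ t ht ih =>
    rcases lt_or_ge j (t + 1) with hjt | hjt
    · rw [hτ.of_lt j (t + 1) hj1 (by omega) (by omega) htn hjt, Nat.add_sub_cancel]
      exact ih (by omega) hj hj1
    · rw [hτ.of_le j (t + 1) hj1 (by omega) (by omega) htn hjt, Nat.add_sub_cancel]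
      have hprev : τ (j - 1) t ≤ 1 := by
        rcases Nat.eq_zero_or_pos (j - 1) with h0 | h1
        · simp [h0, hτ.zero]
        · exact ih (by omega) (by omega) h1
      exact div_one_sub_mul_le_one (hd.c_nonneg j) (hd.c_lt_one hj1 hj) hprev
        (hd.add_le_one j hj1 hj)

theorem le_mul (hτ : TauRecurrence n b c τ) (hd : RowDominant n b c) {x : ℕ → ℝ} {i : ℕ}
    (hx0 : ∀ j, 0 ≤ x j) (hin : i ≤ n)
    (hx : ∀ j, 1 ≤ j → j < i → x j ≤ b j * x (j + 1) + c j * x (j - 1))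
    {t : ℕ} (ht : 1 ≤ t) (htn : t ≤ n - 1) {j : ℕ} (hj : 1 ≤ j) (hji : j < i) :
    x j ≤ τ j t * x (j + 1) := by
  induction j using Nat.strong_induction_on generalizing t with
  | _ j ihj =>
  have ihj' : ∀ {t}, 1 ≤ t → t ≤ n - 1 → 2 ≤ j → x (j - 1) ≤ τ (j - 1) t * x j := by
    intro t ht htn hj2
    simpa [Nat.sub_add_cancel hj] using ihj (j - 1) (by omega) ht htn (by omega) (by omega)
  -- for `j = 1` the term `c j * x (j - 1)` vanishes, otherwise the previous row controls it
  have hprev : ∀ s, (2 ≤ j → x (j - 1) ≤ s * x j) → c j * x (j - 1) ≤ c j * s * x j := by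
    intro s hs
    rcases (by omega : j = 1 ∨ 2 ≤ j) with rfl | hj2
    · simp [hd.c_one]
    · rw [mul_assoc]
      exact mul_le_mul_of_nonneg_left (hs hj2) (hd.c_nonneg j)
  have hcj := hd.c_lt_one hj (by omega)
  induction t, ht using Nat.le_induction with
  | base =>
    rw [hτ.one j hj (by omega), ← mul_one (c j)]
    refine le_div_one_sub_mul_of_le_add (by simpa) (hx j hj hji) (hprev 1 fun hj2 => ?_)
    exact (ihj' le_rfl htn hj2).trans
      (mul_le_mul_of_nonneg_right (hτ.le_one hd le_rfl htn (by omega)) (hx0 j))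
  | succ t ht iht =>
    rcases lt_or_ge j (t + 1) with hjt | hjt
    · rw [hτ.of_lt j (t + 1) hj (by omega) (by omega) htn hjt, Nat.add_sub_cancel]
      exact iht (by omega)
    · rw [hτ.of_le j (t + 1) hj (by omega) (by omega) htn hjt, Nat.add_sub_cancel]
      exact le_div_one_sub_mul_of_le_add
        (mul_lt_one_of_nonneg_of_lt_one_left (hd.c_nonneg j) hcj
          (hτ.le_one hd ht (by omega) (by omega)))
        (hx j hj hji) (hprev _ (ihj' ht (by omega)))

theorem le_mul_of_reverse {ω : ℕ → ℕ → ℝ}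
    (hω : TauRecurrence n (fun k => c (n + 1 - k)) (fun k => b (n + 1 - k))
      (fun k t => ω (n + 1 - k) t))
    (hd : RowDominant n (fun k => c (n + 1 - k)) (fun k => b (n + 1 - k)))
    {x : ℕ → ℝ} {i : ℕ} (hx0 : ∀ j, 0 ≤ x j) (hi : 1 ≤ i)
    (hx : ∀ j, i < j → j ≤ n → x j ≤ b j * x (j + 1) + c j * x (j - 1))
    {t : ℕ} (ht : 1 ≤ t) (htn : t ≤ n - 1) {j : ℕ} (hij : i < j) (hjn : j ≤ n) :
    x j ≤ ω j t * x (j - 1) := by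
  have hrev := hω.le_mul hd (x := fun k => x (n + 1 - k)) (i := n + 1 - i) (fun _ => hx0 _)
    (by omega) (fun k hk hki => ?_) ht htn (j := n + 1 - j) (by omega) (by omega)
  · simpa [show n + 1 - (n + 1 - j) = j by omega,
      show n + 1 - (n + 1 - j + 1) = j - 1 by omega] using hrev
  · have := hx (n + 1 - k) (by omega) (by omega)
    rw [show n + 1 - k + 1 = n + 1 - (k - 1) by omega,
      show n + 1 - k - 1 = n + 1 - (k + 1) by omega] at this
    linarith

end TauRecurrence

/-- Reversing the block order `j ↦ n + 1 - j` exchanges the roles of `B` and `C` and turns the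
recursion defining `ω_{j,t}` into the one defining `τ_{j,t}`. -/
theorem tauRecurrence_reverse {n : ℕ} {b c : ℕ → ℝ} {ω : ℕ → ℕ → ℝ}
    (hω0 : ∀ t, ω (n + 1) t = 0)
    (hω1 : ∀ j, 1 ≤ j → j ≤ n → ω j 1 = c j / (1 - b j))
    (hωa : ∀ j t, 1 ≤ j → j ≤ n → 2 ≤ t → t ≤ n - 1 → n - t + 1 < j → ω j t = ω j (t - 1))
    (hωb : ∀ j t, 1 ≤ j → j ≤ n → 2 ≤ t → t ≤ n - 1 → j ≤ n - t + 1 →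
      ω j t = c j / (1 - b j * ω (j + 1) (t - 1))) :
    TauRecurrence n (fun k => c (n + 1 - k)) (fun k => b (n + 1 - k))
      (fun k t => ω (n + 1 - k) t) where
  zero t := hω0 t
  one k hk hkn := hω1 (n + 1 - k) (by omega) (by omega)
  of_lt k t hk hkn ht htn hkt := hωa (n + 1 - k) t (by omega) (by omega) ht htn (by omega)
  of_le k t hk hkn ht htn htk := by
    rw [hωb (n + 1 - k) t (by omega) (by omega) ht htn (by omega),
      show n + 1 - k + 1 = n + 1 - (k - 1) by omega]

open Finset

def tridiagBlock {R : Type*} [Zero R] (A B C : ℕ → R) (j k : ℕ) : R :=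
  if j = k then A j else if j + 1 = k then B j else if k + 1 = j then C k else 0

theorem sum_tridiagBlock_mul {R : Type*} [Ring R] {n j : ℕ} {A B C : ℕ → R} (W : ℕ → R)
    (hC0 : C 0 = 0) (hBn : B n = 0) (hj : 1 ≤ j) (hjn : j ≤ n) :
    ∑ k ∈ Ico 1 (n + 1), tridiagBlock A B C j k * W k =
      A j * W j + (B j * W (j + 1) + C (j - 1) * W (j - 1)) := by
  have hsplit : ∀ k ∈ Ico 1 (n + 1), tridiagBlock A B C j k * W k =
      (if k = j then A j * W j else 0) +
        ((if k = j + 1 then B j * W (j + 1) else 0) +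
          (if k = j - 1 then C (j - 1) * W (j - 1) else 0)) := by
    intro k hk
    rw [mem_Ico] at hk
    unfold tridiagBlock
    split_ifs <;> subst_vars <;> first | omega | simp
  rw [sum_congr rfl hsplit, sum_add_distrib, sum_add_distrib, sum_ite_eq', sum_ite_eq',
    sum_ite_eq', if_pos (by simp; omega)]
  congr 2
  · split_ifs with h
    · rfl
    · rw [show j = n by simp at h; omega, hBn, zero_mul]
  · split_ifs with h
    · rfl
    · rw [show j - 1 = 0 by simp at h; omega, hC0, zero_mul]

theorem comp_symm_blockTridiag_apply {n m : ℕ} (A B C : ℕ → Matrix (Fin m) (Fin m) ℂ)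
    (p q : Fin n) :
    (Matrix.comp (Fin n) (Fin n) (Fin m) (Fin m) ℂ).symm (blockTridiag n m A B C) p q =
      tridiagBlock A B C (p + 1) (q + 1) := by
  ext k l
  simp only [Matrix.comp_symm_apply, blockTridiag, Matrix.of_apply, tridiagBlock, Fin.ext_iff,
    Nat.add_right_cancel_iff]
  split_ifs <;> rfl

theorem blockTridiag_row_eq {n m : ℕ} {A B C : ℕ → Matrix (Fin m) (Fin m) ℂ}
    {Z : ℕ → ℕ → Matrix (Fin m) (Fin m) ℂ} (hC0 : C 0 = 0) (hBn : B n = 0)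
    (hT : IsUnit (blockTridiag n m A B C))
    (hZ : ∀ i j : Fin n, Z ((i : ℕ) + 1) ((j : ℕ) + 1) =
      Matrix.of fun k l => (blockTridiag n m A B C)⁻¹ (i, k) (j, l))
    {j l : ℕ} (hj : 1 ≤ j) (hjn : j ≤ n) (hl : 1 ≤ l) (hln : l ≤ n) :
    A j * Z j l + (B j * Z (j + 1) l + C (j - 1) * Z (j - 1) l) = if j = l then 1 else 0 := by
  obtain ⟨p, rfl⟩ : ∃ p : Fin n, j = p + 1 := ⟨⟨j - 1, by omega⟩, by simp; omega⟩
  obtain ⟨q, rfl⟩ : ∃ q : Fin n, l = q + 1 := ⟨⟨l - 1, by omega⟩, by simp; omega⟩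
  have h := congrFun (congrFun (congrArg (Matrix.compRingEquiv (Fin n) (Fin m) ℂ).symm
    (Matrix.mul_nonsing_inv _ ((Matrix.isUnit_iff_isUnit_det _).mp hT))) p) q
  rw [map_mul, map_one, Matrix.mul_apply, Matrix.one_apply] at h
  simp only [Matrix.compRingEquiv_symm_apply, comp_symm_blockTridiag_apply] at h
  have hZ' : ∀ k : Fin n, (Matrix.comp (Fin n) (Fin n) (Fin m) (Fin m) ℂ).symm
      (blockTridiag n m A B C)⁻¹ k q = Z (k + 1) (q + 1) := fun k => by
    rw [hZ]; rfl
  simp only [hZ'] at h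
  rw [Fin.sum_univ_eq_sum_range (fun k => tridiagBlock A B C (p + 1) (k + 1) * Z (k + 1) (q + 1)),
    range_eq_Ico, sum_Ico_add' (fun k => tridiagBlock A B C (p + 1) k * Z k (q + 1)),
    sum_tridiagBlock_mul _ hC0 hBn (by omega) (by omega)] at h
  simpa [Fin.ext_iff] using h

theorem norm_block_le_of_ne {n m : ℕ} {A B C : ℕ → Matrix (Fin m) (Fin m) ℂ}
    {Z : ℕ → ℕ → Matrix (Fin m) (Fin m) ℂ} (hC0 : C 0 = 0) (hBn : B n = 0)
    (hT : IsUnit (blockTridiag n m A B C))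
    (hZ : ∀ i j : Fin n, Z ((i : ℕ) + 1) ((j : ℕ) + 1) =
      Matrix.of fun k l => (blockTridiag n m A B C)⁻¹ (i, k) (j, l))
    {j l : ℕ} (hA : IsUnit (A j)) (hj : 1 ≤ j) (hjn : j ≤ n) (hl : 1 ≤ l) (hln : l ≤ n)
    (hjl : j ≠ l) :
    ‖Z j l‖ ≤ ‖(A j)⁻¹ * B j‖ * ‖Z (j + 1) l‖ + ‖(A j)⁻¹ * C (j - 1)‖ * ‖Z (j - 1) l‖ :=
  norm_le_of_mul_add_add_eq_zero (Matrix.nonsing_inv_mul _ ((A j).isUnit_iff_isUnit_det.mp hA))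
    (by rw [blockTridiag_row_eq hC0 hBn hT hZ hj hjn hl hln, if_neg hjl])

theorem norm_inv_mul_pos {m : ℕ} [NeZero m] {M X : Matrix (Fin m) (Fin m) ℂ} (hM : IsUnit M)
    (hX : IsUnit X) : 0 < ‖M⁻¹ * X‖ :=
  norm_pos_iff.2 ((Matrix.isUnit_nonsing_inv_iff.2 hM).mul hX).ne_zero

theorem rowDominant_of_blocks {n m : ℕ} [NeZero m] {A B C : ℕ → Matrix (Fin m) (Fin m) ℂ}
    (hC0 : C 0 = 0) (hB : ∀ i, 1 ≤ i → i ≤ n - 1 → IsUnit (B i))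
    (hAi : ∀ i, 1 ≤ i → i ≤ n → IsUnit (A i))
    (hdom : ∀ i, 1 ≤ i → i ≤ n → ‖(A i)⁻¹ * C (i - 1)‖ + ‖(A i)⁻¹ * B i‖ ≤ 1) :
    RowDominant n (fun j => ‖(A j)⁻¹ * B j‖) (fun j => ‖(A j)⁻¹ * C (j - 1)‖) where
  c_nonneg _ := norm_nonneg _
  c_one := by simp [hC0]
  add_le_one j hj hjn := hdom j hj (by omega)
  b_pos j hj hjn := norm_inv_mul_pos (hAi j hj (by omega)) (hB j hj hjn)

theorem rowDominant_reverse_of_blocks {n m : ℕ} [NeZero m]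
    {A B C : ℕ → Matrix (Fin m) (Fin m) ℂ} (hBn : B n = 0)
    (hC : ∀ i, 1 ≤ i → i ≤ n - 1 → IsUnit (C i)) (hAi : ∀ i, 1 ≤ i → i ≤ n → IsUnit (A i))
    (hdom : ∀ i, 1 ≤ i → i ≤ n → ‖(A i)⁻¹ * C (i - 1)‖ + ‖(A i)⁻¹ * B i‖ ≤ 1) :
    RowDominant n (fun k => ‖(A (n + 1 - k))⁻¹ * C (n + 1 - k - 1)‖)
      (fun k => ‖(A (n + 1 - k))⁻¹ * B (n + 1 - k)‖) where
  c_nonneg _ := norm_nonneg _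
  c_one := by simp [hBn]
  add_le_one k hk hkn := by linarith [hdom (n + 1 - k) (by omega) (by omega)]
  b_pos k hk hkn := norm_inv_mul_pos (hAi _ (by omega) (by omega)) (hC _ (by omega) (by omega))

theorem diag_block_bounds_iter_general
    (n m : ℕ) (hm : 1 ≤ m)
    (A B C : ℕ → Matrix (Fin m) (Fin m) ℂ)
    (hC0 : C 0 = 0) (hBn : B n = 0)
    (hAinv : IsUnit (blockTridiag n m A B C))
    (hB : ∀ i, 1 ≤ i → i ≤ n - 1 → IsUnit (B i))
    (hC : ∀ i, 1 ≤ i → i ≤ n - 1 → IsUnit (C i))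
    (hAi : ∀ i, 1 ≤ i → i ≤ n → IsUnit (A i))
    (hdom : ∀ i, 1 ≤ i → i ≤ n → ‖(A i)⁻¹ * C (i - 1)‖ + ‖(A i)⁻¹ * B i‖ ≤ 1)
    (τ : ℕ → ℝ)
    (hτ : ∀ i, 1 ≤ i → i ≤ n → τ i = ‖(A i)⁻¹ * B i‖ / (1 - ‖(A i)⁻¹ * C (i - 1)‖))
    (ω : ℕ → ℝ)
    (hω : ∀ i, 1 ≤ i → i ≤ n → ω i = ‖(A i)⁻¹ * C (i - 1)‖ / (1 - ‖(A i)⁻¹ * B i‖))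
    (τ' : ℕ → ℕ → ℝ)
    (hτ'1 : ∀ i, τ' i 1 = τ i)
    (hτ'0 : ∀ t, τ' 0 t = 0)
    (hτ'a : ∀ i t, 1 ≤ i → i ≤ n → 2 ≤ t → t ≤ n - 1 → i < t → τ' i t = τ' i (t - 1))
    (hτ'b : ∀ i t, 1 ≤ i → i ≤ n → 2 ≤ t → t ≤ n - 1 → t ≤ i →
      τ' i t = ‖(A i)⁻¹ * B i‖ / (1 - ‖(A i)⁻¹ * C (i - 1)‖ * τ' (i - 1) (t - 1)))
    (ω' : ℕ → ℕ → ℝ)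
    (hω'1 : ∀ i, ω' i 1 = ω i)
    (hω'n : ∀ t, ω' (n + 1) t = 0)
    (hω'a : ∀ i t, 1 ≤ i → i ≤ n → 2 ≤ t → t ≤ n - 1 → n - t + 1 < i → ω' i t = ω' i (t - 1))
    (hω'b : ∀ i t, 1 ≤ i → i ≤ n → 2 ≤ t → t ≤ n - 1 → i ≤ n - t + 1 →
      ω' i t = ‖(A i)⁻¹ * C (i - 1)‖ / (1 - ‖(A i)⁻¹ * B i‖ * ω' (i + 1) (t - 1)))
    (Z : ℕ → ℕ → Matrix (Fin m) (Fin m) ℂ)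
    (hZ : ∀ i j : Fin n, Z ((i : ℕ) + 1) ((j : ℕ) + 1) =
      Matrix.of fun k l => (blockTridiag n m A B C)⁻¹ (i, k) (j, l)) :
    ∀ t, 1 ≤ t → t ≤ n - 1 → ∀ i, 1 ≤ i → i ≤ n →
      (‖(1 : Matrix (Fin m) (Fin m) ℂ)‖ /
          (‖A i‖ + τ' (i - 1) t * ‖C (i - 1)‖ + ω' (i + 1) t * ‖B i‖) ≤ ‖Z i i‖) ∧
      (0 < ‖(A i)⁻¹‖⁻¹ - τ' (i - 1) t * ‖C (i - 1)‖ - ω' (i + 1) t * ‖B i‖ →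
        ‖Z i i‖ ≤ ‖(1 : Matrix (Fin m) (Fin m) ℂ)‖ /
          (‖(A i)⁻¹‖⁻¹ - τ' (i - 1) t * ‖C (i - 1)‖ - ω' (i + 1) t * ‖B i‖)) := by
  intro t ht htn i hi hin
  have : NeZero m := ⟨by omega⟩
  have hoff := fun j hj hjn (hji : j ≠ i) =>
    norm_block_le_of_ne hC0 hBn hAinv hZ (hAi j hj hjn) hj hjn hi hin hji
  have hlow : C (i - 1) = 0 ∨ ‖Z (i - 1) i‖ ≤ τ' (i - 1) t * ‖Z i i‖ := by
    rcases (by omega : i = 1 ∨ 2 ≤ i) with rfl | hi2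
    · exact .inl hC0
    have hτrec : TauRecurrence n (fun j => ‖(A j)⁻¹ * B j‖) (fun j => ‖(A j)⁻¹ * C (j - 1)‖) τ' :=
      ⟨hτ'0, fun j hj hjn => (hτ'1 j).trans (hτ j hj hjn), hτ'a, hτ'b⟩
    refine .inr ?_
    simpa [Nat.sub_add_cancel hi] using hτrec.le_mul (rowDominant_of_blocks hC0 hB hAi hdom)
      (fun _ => norm_nonneg _) hin (fun j hj hji => hoff j hj (by omega) hji.ne) ht htn
      (j := i - 1) (by omega) (by omega)
  have hup : B i = 0 ∨ ‖Z (i + 1) i‖ ≤ ω' (i + 1) t * ‖Z i i‖ := by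
    rcases (by omega : i = n ∨ i < n) with rfl | hin'
    · exact .inl hBn
    have hωrec := tauRecurrence_reverse hω'n (fun j hj hjn => (hω'1 j).trans (hω j hj hjn))
      hω'a hω'b
    refine .inr ?_
    simpa using hωrec.le_mul_of_reverse (rowDominant_reverse_of_blocks hBn hC hAi hdom)
      (fun _ => norm_nonneg _) hi (fun j hij hjn => hoff j (by omega) hjn hij.ne') ht htn
      (j := i + 1) (by omega) (by omega)
  have hE : ‖B i * Z (i + 1) i + C (i - 1) * Z (i - 1) i‖ ≤
      (τ' (i - 1) t * ‖C (i - 1)‖ + ω' (i + 1) t * ‖B i‖) * ‖Z i i‖ := by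
    linarith [norm_add_le (B i * Z (i + 1) i) (C (i - 1) * Z (i - 1) i),
      norm_mul_le_of_eq_zero_or hup, norm_mul_le_of_eq_zero_or hlow]
  have hdiag : A i * Z i i + (B i * Z (i + 1) i + C (i - 1) * Z (i - 1) i) = 1 := by
    simpa using blockTridiag_row_eq hC0 hBn hAinv hZ hi hin hi hin
  refine ⟨by simpa only [add_assoc] using norm_one_div_le_norm_of_mul_add_eq_one hdiag hE,
    fun hpos => ?_⟩
  rw [sub_sub] at hpos ⊢
  exact norm_le_norm_one_div_of_mul_add_eq_one
    (Matrix.nonsing_inv_mul _ ((A i).isUnit_iff_isUnit_det.mp (hAi i hi hin))) hdiag hE hpos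

theorem diag_block_bounds_iter
    (n m : ℕ) (hn : 2 ≤ n) (hm : 1 ≤ m)
    (A B C : ℕ → Matrix (Fin m) (Fin m) ℂ)
    (hC0 : C 0 = 0) (hBn : B n = 0)
    (hAinv : IsUnit (blockTridiag n m A B C))
    (hB : ∀ i, 1 ≤ i → i ≤ n - 1 → IsUnit (B i))
    (hC : ∀ i, 1 ≤ i → i ≤ n - 1 → IsUnit (C i))
    (hAi : ∀ i, 1 ≤ i → i ≤ n → IsUnit (A i))
    (hdom : ∀ i, 1 ≤ i → i ≤ n → ‖(A i)⁻¹ * C (i - 1)‖ + ‖(A i)⁻¹ * B i‖ ≤ 1)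
    (hB1 : ‖(A 1)⁻¹ * B 1‖ < 1)
    (hCn : ‖(A n)⁻¹ * C (n - 1)‖ < 1)
    (τ : ℕ → ℝ)
    (hτ : ∀ i, 1 ≤ i → i ≤ n → τ i = ‖(A i)⁻¹ * B i‖ / (1 - ‖(A i)⁻¹ * C (i - 1)‖))
    (ω : ℕ → ℝ)
    (hω : ∀ i, 1 ≤ i → i ≤ n → ω i = ‖(A i)⁻¹ * C (i - 1)‖ / (1 - ‖(A i)⁻¹ * B i‖))
    (τ' : ℕ → ℕ → ℝ)
    (hτ'1 : ∀ i, τ' i 1 = τ i)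
    (hτ'0 : ∀ t, τ' 0 t = 0)
    (hτ'a : ∀ i t, 1 ≤ i → i ≤ n → 2 ≤ t → t ≤ n - 1 → i < t → τ' i t = τ' i (t - 1))
    (hτ'b : ∀ i t, 1 ≤ i → i ≤ n → 2 ≤ t → t ≤ n - 1 → t ≤ i →
      τ' i t = ‖(A i)⁻¹ * B i‖ / (1 - ‖(A i)⁻¹ * C (i - 1)‖ * τ' (i - 1) (t - 1)))
    (ω' : ℕ → ℕ → ℝ)
    (hω'1 : ∀ i, ω' i 1 = ω i)
    (hω'n : ∀ t, ω' (n + 1) t = 0)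
    (hω'a : ∀ i t, 1 ≤ i → i ≤ n → 2 ≤ t → t ≤ n - 1 → n - t + 1 < i → ω' i t = ω' i (t - 1))
    (hω'b : ∀ i t, 1 ≤ i → i ≤ n → 2 ≤ t → t ≤ n - 1 → i ≤ n - t + 1 →
      ω' i t = ‖(A i)⁻¹ * C (i - 1)‖ / (1 - ‖(A i)⁻¹ * B i‖ * ω' (i + 1) (t - 1)))
    (Z : ℕ → ℕ → Matrix (Fin m) (Fin m) ℂ)
    (hZ : ∀ i j : Fin n, Z ((i : ℕ) + 1) ((j : ℕ) + 1) =
      Matrix.of fun k l => (blockTridiag n m A B C)⁻¹ (i, k) (j, l)) :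
    ∀ t, 1 ≤ t → t ≤ n - 1 → ∀ i, 1 ≤ i → i ≤ n →
      (‖(1 : Matrix (Fin m) (Fin m) ℂ)‖ /
          (‖A i‖ + τ' (i - 1) t * ‖C (i - 1)‖ + ω' (i + 1) t * ‖B i‖) ≤ ‖Z i i‖) ∧
      (0 < ‖(A i)⁻¹‖⁻¹ - τ' (i - 1) t * ‖C (i - 1)‖ - ω' (i + 1) t * ‖B i‖ →
        ‖Z i i‖ ≤ ‖(1 : Matrix (Fin m) (Fin m) ℂ)‖ /
          (‖(A i)⁻¹‖⁻¹ - τ' (i - 1) t * ‖C (i - 1)‖ - ω' (i + 1) t * ‖B i‖)) :=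
  diag_block_bounds_iter_general n m hm A B C hC0 hBn hAinv hB hC hAi hdom τ hτ ω hω τ' hτ'1 hτ'0
    hτ'a hτ'b ω' hω'1 hω'n hω'a hω'b Z hZ
end

section
/- Under the standing assumptions, for each fixed i, the sequences {τ_{i,t}}_{t=1}^{n−1} and {ω_{i,t}}_{t=1}^{n−1} are (weakly) decreasing in t, i.e. τ_{i,t+1} ≤ τ_{i,t} and ω_{i,t+1} ≤ ω_{i,t} for all admissible i and t. -/
open scoped Matrix
attribute [local instance] Matrix.linftyOpNormedRing

/-!
Each step of either iteration applies a map `x ↦ b / (1 - c x)` with `b, c ≥ 0` and `b + c ≤ 1`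
(row diagonal dominance). Such a map sends `[0, 1]` into itself and is monotone there. Since
`τ_{i,1} = b_i / (1 - c_i · 1)`, the first iterate is the image of the upper end `1`, and
monotonicity then propagates `τ_{i,t+1} ≤ τ_{i,t}` from row `i - 1` to row `i`, by induction on `t`.
The `ω` iteration is the `τ` iteration with the rows read from bottom to top.
-/

open Set

section FractionalMap

variable {b c : ℝ}

lemma mapsTo_div_one_sub_mul (hb : 0 ≤ b) (hc : 0 ≤ c) (hbc : b + c ≤ 1) :
    MapsTo (fun x => b / (1 - c * x)) (Icc 0 1) (Icc 0 1) := by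
  rintro x ⟨hx0, hx1⟩
  have hcx : c * x ≤ c := mul_le_of_le_one_right hc hx1
  exact ⟨div_nonneg hb (by linarith), div_le_one_of_le₀ (by linarith) (by linarith)⟩

lemma monotoneOn_div_one_sub_mul (hb : 0 ≤ b) (hc : 0 ≤ c) (hbc : b + c ≤ 1) :
    MonotoneOn (fun x => b / (1 - c * x)) (Icc 0 1) := by
  rintro x ⟨hx0, -⟩ y ⟨-, hy1⟩ hxy
  rcases hb.eq_or_lt with rfl | hb_pos
  · simp
  have hcy : c * y ≤ c := mul_le_of_le_one_right hc hy1
  have hcxy : c * x ≤ c * y := mul_le_mul_of_nonneg_left hxy hc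
  exact div_le_div_of_nonneg_left hb (by linarith) (by linarith)

end FractionalMap

structure IsTauRecursion (n : ℕ) (b c : ℕ → ℝ) (x : ℕ → ℕ → ℝ) : Prop where
  one : ∀ i, 1 ≤ i → i ≤ n → x i 1 = b i / (1 - c i)
  of_lt : ∀ i t, 1 ≤ i → i ≤ n → 2 ≤ t → t ≤ n - 1 → i < t → x i t = x i (t - 1)
  of_le : ∀ i t, 1 ≤ i → i ≤ n → 2 ≤ t → t ≤ n - 1 → t ≤ i →
    x i t = b i / (1 - c i * x (i - 1) (t - 1))

structure IsOmegaRecursion (n : ℕ) (b c : ℕ → ℝ) (x : ℕ → ℕ → ℝ) : Prop where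
  one : ∀ i, 1 ≤ i → i ≤ n → x i 1 = b i / (1 - c i)
  of_lt : ∀ i t, 1 ≤ i → i ≤ n → 2 ≤ t → t ≤ n - 1 → n - t + 1 < i → x i t = x i (t - 1)
  of_le : ∀ i t, 1 ≤ i → i ≤ n → 2 ≤ t → t ≤ n - 1 → i ≤ n - t + 1 →
    x i t = b i / (1 - c i * x (i + 1) (t - 1))

namespace IsTauRecursion

variable {n : ℕ} {b c : ℕ → ℝ} {x : ℕ → ℕ → ℝ}

lemma mem_Icc (h : IsTauRecursion n b c x) (hb : ∀ i, 0 ≤ b i) (hc : ∀ i, 0 ≤ c i)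
    (hbc : ∀ i, 1 ≤ i → i ≤ n → b i + c i ≤ 1) {t : ℕ} (ht : 1 ≤ t) (htn : t ≤ n - 1) :
    ∀ i, 1 ≤ i → i ≤ n → x i t ∈ Icc 0 1 := by
  induction t, ht using Nat.le_induction with
  | base =>
    intro i hi hin
    have := mapsTo_div_one_sub_mul (hb i) (hc i) (hbc i hi hin) (right_mem_Icc.2 zero_le_one)
    simpa [h.one i hi hin] using this
  | succ t ht ih =>
    intro i hi hin
    by_cases hti : t + 1 ≤ i
    · rw [h.of_le i (t + 1) hi hin (by omega) htn hti, Nat.add_sub_cancel]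
      exact mapsTo_div_one_sub_mul (hb i) (hc i) (hbc i hi hin)
        (ih (by omega) (i - 1) (by omega) (by omega))
    · rw [h.of_lt i (t + 1) hi hin (by omega) htn (by omega), Nat.add_sub_cancel]
      exact ih (by omega) i hi hin

lemma succ_le (h : IsTauRecursion n b c x) (hb : ∀ i, 0 ≤ b i) (hc : ∀ i, 0 ≤ c i)
    (hbc : ∀ i, 1 ≤ i → i ≤ n → b i + c i ≤ 1) {t : ℕ} (ht : 1 ≤ t) (htn : t + 1 ≤ n - 1) :
    ∀ i, 1 ≤ i → i ≤ n → x i (t + 1) ≤ x i t := by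
  induction t, ht using Nat.le_induction with
  | base =>
    intro i hi hin
    by_cases hi2 : 2 ≤ i
    · rw [h.of_le i 2 hi hin le_rfl htn hi2, h.one i hi hin]
      have hx := h.mem_Icc hb hc hbc le_rfl (by omega) (i - 1) (by omega) (by omega)
      simpa using monotoneOn_div_one_sub_mul (hb i) (hc i) (hbc i hi hin) hx
        (right_mem_Icc.2 zero_le_one) hx.2
    · exact (h.of_lt i 2 hi hin le_rfl htn (by omega)).le
  | succ t ht ih =>
    intro i hi hin
    by_cases hti : t + 2 ≤ i
    · rw [h.of_le i (t + 2) hi hin (by omega) htn hti,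
        h.of_le i (t + 1) hi hin (by omega) (by omega) (by omega)]
      exact monotoneOn_div_one_sub_mul (hb i) (hc i) (hbc i hi hin)
        (h.mem_Icc hb hc hbc (by omega) (by omega) (i - 1) (by omega) (by omega))
        (h.mem_Icc hb hc hbc ht (by omega) (i - 1) (by omega) (by omega))
        (ih (by omega) (i - 1) (by omega) (by omega))
    · exact (h.of_lt i (t + 2) hi hin (by omega) htn (by omega)).le

end IsTauRecursion

lemma IsOmegaRecursion.reverse {n : ℕ} {b c : ℕ → ℝ} {x : ℕ → ℕ → ℝ}
    (h : IsOmegaRecursion n b c x) :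
    IsTauRecursion n (fun i => b (n + 1 - i)) (fun i => c (n + 1 - i))
      (fun i t => x (n + 1 - i) t) where
  one i hi hin := h.one (n + 1 - i) (by omega) (by omega)
  of_lt i t hi hin ht htn hit := h.of_lt (n + 1 - i) t (by omega) (by omega) ht htn (by omega)
  of_le i t hi hin ht htn hti := by
    rw [show n + 1 - (i - 1) = n + 1 - i + 1 by omega]
    exact h.of_le (n + 1 - i) t (by omega) (by omega) ht htn (by omega)

theorem tau_omega_iter_antitone_general
    (n m : ℕ)
    (A B C : ℕ → Matrix (Fin m) (Fin m) ℂ)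
    (hdom : ∀ i, 1 ≤ i → i ≤ n → ‖(A i)⁻¹ * C (i - 1)‖ + ‖(A i)⁻¹ * B i‖ ≤ 1)
    (τ : ℕ → ℝ)
    (hτ : ∀ i, 1 ≤ i → i ≤ n → τ i = ‖(A i)⁻¹ * B i‖ / (1 - ‖(A i)⁻¹ * C (i - 1)‖))
    (ω : ℕ → ℝ)
    (hω : ∀ i, 1 ≤ i → i ≤ n → ω i = ‖(A i)⁻¹ * C (i - 1)‖ / (1 - ‖(A i)⁻¹ * B i‖))
    (τ' : ℕ → ℕ → ℝ)
    (hτ'1 : ∀ i, τ' i 1 = τ i)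
    (hτ'a : ∀ i t, 1 ≤ i → i ≤ n → 2 ≤ t → t ≤ n - 1 → i < t → τ' i t = τ' i (t - 1))
    (hτ'b : ∀ i t, 1 ≤ i → i ≤ n → 2 ≤ t → t ≤ n - 1 → t ≤ i →
      τ' i t = ‖(A i)⁻¹ * B i‖ / (1 - ‖(A i)⁻¹ * C (i - 1)‖ * τ' (i - 1) (t - 1)))
    (ω' : ℕ → ℕ → ℝ)
    (hω'1 : ∀ i, ω' i 1 = ω i)
    (hω'a : ∀ i t, 1 ≤ i → i ≤ n → 2 ≤ t → t ≤ n - 1 → n - t + 1 < i → ω' i t = ω' i (t - 1))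
    (hω'b : ∀ i t, 1 ≤ i → i ≤ n → 2 ≤ t → t ≤ n - 1 → i ≤ n - t + 1 →
      ω' i t = ‖(A i)⁻¹ * C (i - 1)‖ / (1 - ‖(A i)⁻¹ * B i‖ * ω' (i + 1) (t - 1))) :
    ∀ i t, 1 ≤ i → i ≤ n → 1 ≤ t → t ≤ n - 2 →
      τ' i (t + 1) ≤ τ' i t ∧ ω' i (t + 1) ≤ ω' i t := by
  intro i t hi hin ht htn
  have hτrec : IsTauRecursion n (fun i => ‖(A i)⁻¹ * B i‖) (fun i => ‖(A i)⁻¹ * C (i - 1)‖) τ' :=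
    ⟨fun i hi hin => (hτ'1 i).trans (hτ i hi hin), hτ'a, hτ'b⟩
  have hωrec : IsOmegaRecursion n (fun i => ‖(A i)⁻¹ * C (i - 1)‖) (fun i => ‖(A i)⁻¹ * B i‖) ω' :=
    ⟨fun i hi hin => (hω'1 i).trans (hω i hi hin), hω'a, hω'b⟩
  refine ⟨hτrec.succ_le (fun _ => norm_nonneg _) (fun _ => norm_nonneg _)
    (fun i hi hin => (add_comm _ _).trans_le (hdom i hi hin)) ht (by omega) i hi hin, ?_⟩
  have hrev := hωrec.reverse.succ_le (fun _ => norm_nonneg _) (fun _ => norm_nonneg _)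
    (fun j hj hjn => hdom (n + 1 - j) (by omega) (by omega)) ht (by omega)
    (n + 1 - i) (by omega) (by omega)
  simpa only [show n + 1 - (n + 1 - i) = i by omega] using hrev

theorem tau_omega_iter_antitone
    (n m : ℕ) (hn : 2 ≤ n) (hm : 1 ≤ m)
    (A B C : ℕ → Matrix (Fin m) (Fin m) ℂ)
    (hC0 : C 0 = 0) (hBn : B n = 0)
    (hAinv : IsUnit (blockTridiag n m A B C))
    (hB : ∀ i, 1 ≤ i → i ≤ n - 1 → IsUnit (B i))
    (hC : ∀ i, 1 ≤ i → i ≤ n - 1 → IsUnit (C i))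
    (hAi : ∀ i, 1 ≤ i → i ≤ n → IsUnit (A i))
    (hdom : ∀ i, 1 ≤ i → i ≤ n → ‖(A i)⁻¹ * C (i - 1)‖ + ‖(A i)⁻¹ * B i‖ ≤ 1)
    (hB1 : ‖(A 1)⁻¹ * B 1‖ < 1)
    (hCn : ‖(A n)⁻¹ * C (n - 1)‖ < 1)
    (τ : ℕ → ℝ)
    (hτ : ∀ i, 1 ≤ i → i ≤ n → τ i = ‖(A i)⁻¹ * B i‖ / (1 - ‖(A i)⁻¹ * C (i - 1)‖))
    (ω : ℕ → ℝ)
    (hω : ∀ i, 1 ≤ i → i ≤ n → ω i = ‖(A i)⁻¹ * C (i - 1)‖ / (1 - ‖(A i)⁻¹ * B i‖))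
    (τ' : ℕ → ℕ → ℝ)
    (hτ'1 : ∀ i, τ' i 1 = τ i)
    (hτ'0 : ∀ t, τ' 0 t = 0)
    (hτ'a : ∀ i t, 1 ≤ i → i ≤ n → 2 ≤ t → t ≤ n - 1 → i < t → τ' i t = τ' i (t - 1))
    (hτ'b : ∀ i t, 1 ≤ i → i ≤ n → 2 ≤ t → t ≤ n - 1 → t ≤ i →
      τ' i t = ‖(A i)⁻¹ * B i‖ / (1 - ‖(A i)⁻¹ * C (i - 1)‖ * τ' (i - 1) (t - 1)))
    (ω' : ℕ → ℕ → ℝ)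
    (hω'1 : ∀ i, ω' i 1 = ω i)
    (hω'n : ∀ t, ω' (n + 1) t = 0)
    (hω'a : ∀ i t, 1 ≤ i → i ≤ n → 2 ≤ t → t ≤ n - 1 → n - t + 1 < i → ω' i t = ω' i (t - 1))
    (hω'b : ∀ i t, 1 ≤ i → i ≤ n → 2 ≤ t → t ≤ n - 1 → i ≤ n - t + 1 →
      ω' i t = ‖(A i)⁻¹ * C (i - 1)‖ / (1 - ‖(A i)⁻¹ * B i‖ * ω' (i + 1) (t - 1))) :
    ∀ i t, 1 ≤ i → i ≤ n → 1 ≤ t → t ≤ n - 2 →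
      τ' i (t + 1) ≤ τ' i t ∧ ω' i (t + 1) ≤ ω' i t :=
  tau_omega_iter_antitone_general n m A B C hdom τ hτ ω hω τ' hτ'1 hτ'a hτ'b ω' hω'1 hω'a hω'b
end

section
/- Under the standing assumptions, set ρ_{1,t} = max_i τ_{i,t} and ρ_{2,t} = max_i ω_{i,t} for each t = 1,…,n−1. Then the blocks Z_{ij} of the inverse A⁻¹ satisfy ‖Z_{ij}‖ ≤ ρ_{1,t}^{j−i} ‖Z_{jj}‖ for all i < j, and ‖Z_{ij}‖ ≤ ρ_{2,t}^{i−j} ‖Z_{jj}‖ for all i > j, for each t = 1,…,n−1. -/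
/-!
For `i ≠ j`, block row `i` of `A * A⁻¹ = 1` multiplied by `A_i⁻¹` gives
`‖Z_ij‖ ≤ ‖A_i⁻¹ C_{i-1}‖ ‖Z_{i-1,j}‖ + ‖A_i⁻¹ B_i‖ ‖Z_{i+1,j}‖`. Above the diagonal, a bound
`‖Z_{i-1,j}‖ ≤ s ‖Z_ij‖` with `0 ≤ s ≤ 1` turns this into
`‖Z_ij‖ ≤ ‖A_i⁻¹ B_i‖ / (1 - ‖A_i⁻¹ C_{i-1}‖ s) ‖Z_{i+1,j}‖`. Starting from the first row, where
`C_0 = 0`, and feeding each ratio into the next row gives `‖Z_ij‖ ≤ τ_{i,t} ‖Z_{i+1,j}‖`; row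
dominance keeps every ratio in `[0, 1]`, and chaining the rows gives the power of `ρ_{1,t}`.
Below the diagonal the same sweep runs through the rows in reverse order, with `B` and `C`
exchanged and `ω` in place of `τ`.
-/

open scoped Matrix
attribute [local instance] Matrix.linftyOpNormedRing

open Set

theorem div_one_sub_mul_mem_Icc {b c s : ℝ} (hb : 0 ≤ b) (hc : 0 ≤ c) (hcb : c + b ≤ 1)
    (hc1 : c < 1) (hs : s ∈ Icc (0 : ℝ) 1) : b / (1 - c * s) ∈ Icc (0 : ℝ) 1 := by
  have hcs : c * s ≤ c := mul_le_of_le_one_right hc hs.2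
  have hd : 0 < 1 - c * s := by linarith
  exact ⟨div_nonneg hb hd.le, (div_le_one hd).mpr (by nlinarith [mul_nonneg hc hs.1])⟩

theorem le_div_mul_of_le_mul_add {x x' y b c s : ℝ} (h : x ≤ c * x' + b * y) (h' : x' ≤ s * x)
    (hc : 0 ≤ c) (hcs : c * s < 1) : x ≤ b / (1 - c * s) * y := by
  rw [div_mul_eq_mul_div, le_div_iff₀ (by linarith)]
  nlinarith [mul_le_mul_of_nonneg_left h' hc]

theorem le_pow_mul_of_le_mul {z : ℕ → ℝ} {ρ : ℝ} {j : ℕ} (hρ : 0 ≤ ρ)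
    (h : ∀ i, 1 ≤ i → i < j → z i ≤ ρ * z (i + 1)) {i : ℕ} (hi : 1 ≤ i) (hij : i ≤ j) :
    z i ≤ ρ ^ (j - i) * z j := by
  induction hdiff : j - i generalizing i with
  | zero => simp [show i = j by omega]
  | succ d ih =>
    calc z i ≤ ρ * z (i + 1) := h i hi (by omega)
      _ ≤ ρ * (ρ ^ d * z j) := by gcongr; exact ih (by omega) (by omega) (by omega)
      _ = ρ ^ (d + 1) * z j := by ring

-- The scalar data of the sweep: `c i = ‖A_i⁻¹ C_{i-1}‖` and `b i = ‖A_i⁻¹ B_i‖` on the rows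
-- `1 ≤ i ≤ N` it visits.
structure RowDominant_s17 (c b : ℕ → ℝ) (N : ℕ) : Prop where
  c_nonneg : ∀ i, 0 ≤ c i
  b_nonneg : ∀ i, 0 ≤ b i
  c_one : c 1 = 0
  add_le_one : ∀ i, 1 ≤ i → i ≤ N → c i + b i ≤ 1
  b_pos : ∀ i, 1 ≤ i → i ≤ N → 0 < b i

-- The recursion defining `τ_{i,t}`, for `i ≤ N` and `t ≤ T`.
structure IsSweepRatio (c b : ℕ → ℝ) (N T : ℕ) (r : ℕ → ℕ → ℝ) : Prop where
  one : ∀ i, 1 ≤ i → i ≤ N → r i 1 = b i / (1 - c i)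
  of_lt : ∀ i t, 1 ≤ i → i ≤ N → 2 ≤ t → t ≤ T → i < t → r i t = r i (t - 1)
  of_le : ∀ i t, 1 ≤ i → i ≤ N → 2 ≤ t → t ≤ T → t ≤ i →
    r i t = b i / (1 - c i * r (i - 1) (t - 1))

namespace RowDominant_s17

variable {c b : ℕ → ℝ} {N : ℕ}

theorem c_lt_one_s17 (hd : RowDominant_s17 c b N) {i : ℕ} (hi : 1 ≤ i) (hiN : i ≤ N) : c i < 1 := by
  linarith [hd.add_le_one i hi hiN, hd.b_pos i hi hiN]

theorem div_mem_Icc (hd : RowDominant_s17 c b N) {i : ℕ} (hi : 1 ≤ i) (hiN : i ≤ N) {s : ℝ}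
    (hs : s ∈ Icc (0 : ℝ) 1) : b i / (1 - c i * s) ∈ Icc (0 : ℝ) 1 :=
  div_one_sub_mul_mem_Icc (hd.b_nonneg i) (hd.c_nonneg i) (hd.add_le_one i hi hiN)
    (hd.c_lt_one_s17 hi hiN) hs

end RowDominant_s17

namespace IsSweepRatio

variable {c b z : ℕ → ℝ} {N T j : ℕ} {r : ℕ → ℕ → ℝ}

theorem mem_Icc (hr : IsSweepRatio c b N T r) (hd : RowDominant_s17 c b N) {t : ℕ} (ht : 1 ≤ t)
    (htT : t ≤ T) {i : ℕ} (hi : 1 ≤ i) (hiN : i ≤ N) : r i t ∈ Icc (0 : ℝ) 1 := by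
  induction t, ht using Nat.le_induction generalizing i with
  | base =>
    rw [hr.one i hi hiN, ← mul_one (c i)]
    exact hd.div_mem_Icc hi hiN ⟨zero_le_one, le_rfl⟩
  | succ t ht ih =>
    rcases lt_or_ge i (t + 1) with hit | hit
    · rw [hr.of_lt i (t + 1) hi hiN (by omega) htT hit, Nat.add_sub_cancel]
      exact ih (by omega) hi hiN
    · rw [hr.of_le i (t + 1) hi hiN (by omega) htT hit, Nat.add_sub_cancel]
      exact hd.div_mem_Icc hi hiN (ih (by omega) (by omega) (by omega))

theorem le_mul_base (hr : IsSweepRatio c b N T r) (hd : RowDominant_s17 c b N)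
    (hz0 : ∀ i, 0 ≤ z i) (hjN : j ≤ N + 1)
    (hz : ∀ i, 1 ≤ i → i < j → z i ≤ c i * z (i - 1) + b i * z (i + 1)) (hT : 1 ≤ T)
    {i : ℕ} (hi : 1 ≤ i) (hij : i < j) :
    z i ≤ r i 1 * z (i + 1) := by
  induction i, hi using Nat.le_induction with
  | base => simpa [hr.one 1 le_rfl (by omega), hd.c_one] using hz 1 le_rfl hij
  | succ i hi ih =>
    have hri := hr.mem_Icc hd le_rfl hT hi (by omega)
    have hstep := le_div_mul_of_le_mul_add (by simpa using hz (i + 1) (by omega) hij)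
      (ih (by omega)) (hd.c_nonneg _)
      (by nlinarith [hd.c_nonneg (i + 1), hd.c_lt_one_s17 (i := i + 1) (by omega) (by omega), hri.2])
    refine hstep.trans (mul_le_mul_of_nonneg_right ?_ (hz0 _))
    rw [hr.one (i + 1) (by omega) (by omega)]
    exact div_le_div_of_nonneg_left (hd.b_nonneg _)
      (by linarith [hd.c_lt_one_s17 (i := i + 1) (by omega) (by omega)])
      (by nlinarith [hd.c_nonneg (i + 1), hri.2])

theorem le_mul (hr : IsSweepRatio c b N T r) (hd : RowDominant_s17 c b N)
    (hz0 : ∀ i, 0 ≤ z i) (hjN : j ≤ N + 1)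
    (hz : ∀ i, 1 ≤ i → i < j → z i ≤ c i * z (i - 1) + b i * z (i + 1))
    {t : ℕ} (ht : 1 ≤ t) (htT : t ≤ T) {i : ℕ} (hi : 1 ≤ i) (hij : i < j) :
    z i ≤ r i t * z (i + 1) := by
  induction t, ht using Nat.le_induction generalizing i with
  | base => exact hr.le_mul_base hd hz0 hjN hz htT hi hij
  | succ t ht ih =>
    rcases lt_or_ge i (t + 1) with hit | hit
    · rw [hr.of_lt i (t + 1) hi (by omega) (by omega) htT hit, Nat.add_sub_cancel]
      exact ih (by omega) hi hij
    · have hprev := ih (by omega) (i := i - 1) (by omega) (by omega)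
      rw [Nat.sub_add_cancel (by omega : 1 ≤ i)] at hprev
      have hri := hr.mem_Icc hd ht (by omega) (i := i - 1) (by omega) (by omega)
      rw [hr.of_le i (t + 1) hi (by omega) (by omega) htT hit, Nat.add_sub_cancel]
      exact le_div_mul_of_le_mul_add (hz i hi hij) hprev (hd.c_nonneg i)
        (by nlinarith [hd.c_nonneg i, hd.c_lt_one_s17 hi (by omega), hri.2])

theorem le_pow_mul (hr : IsSweepRatio c b N T r) (hd : RowDominant_s17 c b N)
    (hz0 : ∀ i, 0 ≤ z i) (hjN : j ≤ N + 1)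
    (hz : ∀ i, 1 ≤ i → i < j → z i ≤ c i * z (i - 1) + b i * z (i + 1)) (hN : 1 ≤ N)
    {t : ℕ} (ht : 1 ≤ t) (htT : t ≤ T) {ρ : ℝ}
    (hρ : ∀ i, 1 ≤ i → i ≤ N → r i t ≤ ρ) {i : ℕ} (hi : 1 ≤ i) (hij : i ≤ j) :
    z i ≤ ρ ^ (j - i) * z j :=
  le_pow_mul_of_le_mul ((hr.mem_Icc hd ht htT le_rfl hN).1.trans (hρ 1 le_rfl hN))
    (fun k hk hkj => (hr.le_mul hd hz0 hjN hz ht htT hk hkj).trans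
      (mul_le_mul_of_nonneg_right (hρ k hk (by omega)) (hz0 _))) hi hij

end IsSweepRatio

section InverseNorm

variable {ι 𝕜 : Type*} [Fintype ι] [DecidableEq ι] [NormedField 𝕜]

theorem norm_le_of_mul_add_mul_add_mul_eq_zero {a b c x y w : Matrix ι ι 𝕜} (ha : IsUnit a)
    (h : c * x + a * y + b * w = 0) : ‖y‖ ≤ ‖a⁻¹ * c‖ * ‖x‖ + ‖a⁻¹ * b‖ * ‖w‖ := by
  have hy : y = -(a⁻¹ * c * x + a⁻¹ * b * w) := by
    have := congrArg (a⁻¹ * ·) h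
    simp only [Matrix.mul_add, ← Matrix.mul_assoc, Matrix.nonsing_inv_mul _
      ((Matrix.isUnit_iff_isUnit_det a).mp ha), Matrix.one_mul, Matrix.mul_zero] at this
    rw [← sub_eq_zero, sub_neg_eq_add]
    rw [← this]; abel
  calc ‖y‖ ≤ ‖a⁻¹ * c * x‖ + ‖a⁻¹ * b * w‖ := by rw [hy, norm_neg]; exact norm_add_le _ _
    _ ≤ ‖a⁻¹ * c‖ * ‖x‖ + ‖a⁻¹ * b‖ * ‖w‖ := add_le_add (norm_mul_le _ _) (norm_mul_le _ _)

theorem norm_inv_mul_pos_s17 [Nonempty ι] {a b : Matrix ι ι 𝕜} (ha : IsUnit a) (hb : IsUnit b) :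
    0 < ‖a⁻¹ * b‖ :=
  norm_pos_iff.mpr ((Matrix.isUnit_nonsing_inv_iff.mpr ha).mul hb).ne_zero

end InverseNorm

theorem sum_range_ite_add_one_eq {M : Type*} [AddCommMonoid M] (n k : ℕ) (x : M) :
    ∑ r ∈ Finset.range n, (if r + 1 = k then x else 0) = if 1 ≤ k ∧ k ≤ n then x else 0 := by
  induction n with
  | zero => simp; omega
  | succ n ih =>
    rw [Finset.sum_range_succ, ih]
    split_ifs <;> first | omega | simp

theorem comp_symm_blockTridiag {n m : ℕ} (A B C : ℕ → Matrix (Fin m) (Fin m) ℂ) (p q : Fin n) :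
    (Matrix.comp _ _ _ _ ℂ).symm (blockTridiag n m A B C) p q =
      if (q : ℕ) = p then A (p + 1) else if (q : ℕ) = p + 1 then B (p + 1)
      else if (q : ℕ) + 1 = p then C (q + 1) else 0 := by
  ext k l
  simp only [Matrix.comp_symm_apply, blockTridiag, Matrix.of_apply, Fin.ext_iff]
  split_ifs <;> first | omega | rfl

theorem blockTridiag_row_mul {n m : ℕ} {A B C : ℕ → Matrix (Fin m) (Fin m) ℂ}
    (hC0 : C 0 = 0) (hBn : B n = 0) (W : ℕ → Matrix (Fin m) (Fin m) ℂ)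
    {i : ℕ} (hi : 1 ≤ i) (hin : i ≤ n) :
    ∑ r : Fin n,
        (Matrix.comp _ _ _ _ ℂ).symm (blockTridiag n m A B C) ⟨i - 1, by omega⟩ r * W (r + 1) =
      C (i - 1) * W (i - 1) + A i * W i + B i * W (i + 1) := by
  have hrow : ∀ r : ℕ, (if r = i - 1 then A i else if r = i then B i
      else if r + 1 = i - 1 then C (r + 1) else 0) * W (r + 1) =
      (if r + 1 = i - 1 then C (i - 1) * W (i - 1) else 0) +
      (if r + 1 = i then A i * W i else 0) + (if r + 1 = i + 1 then B i * W (i + 1) else 0) := by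
    intro r
    split_ifs <;> simp only [zero_add, add_zero, zero_mul, *] <;> first | omega | (congr; omega)
  simp only [comp_symm_blockTridiag, Nat.sub_add_cancel hi]
  rw [Fin.sum_univ_eq_sum_range (fun r => (if r = i - 1 then A i else if r = i then B i
      else if r + 1 = i - 1 then C (r + 1) else 0) * W (r + 1)),
    Finset.sum_congr rfl fun r _ => hrow r, Finset.sum_add_distrib, Finset.sum_add_distrib,
    sum_range_ite_add_one_eq, sum_range_ite_add_one_eq, sum_range_ite_add_one_eq]
  have hCterm : (if 1 ≤ i - 1 ∧ i - 1 ≤ n then C (i - 1) * W (i - 1) else 0) =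
      C (i - 1) * W (i - 1) := by
    split_ifs with h
    · rfl
    · rw [show i - 1 = 0 by omega, hC0, zero_mul]
  have hBterm : (if 1 ≤ i + 1 ∧ i + 1 ≤ n then B i * W (i + 1) else 0) = B i * W (i + 1) := by
    split_ifs with h
    · rfl
    · rw [show i = n by omega, hBn, zero_mul]
  rw [hCterm, hBterm, if_pos ⟨hi, hin⟩]

theorem blockTridiag_inv_block_row {n m : ℕ} {A B C : ℕ → Matrix (Fin m) (Fin m) ℂ}
    (hC0 : C 0 = 0) (hBn : B n = 0) (hT : IsUnit (blockTridiag n m A B C))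
    {Z : ℕ → ℕ → Matrix (Fin m) (Fin m) ℂ}
    (hZ : ∀ i j : Fin n, Z ((i : ℕ) + 1) ((j : ℕ) + 1) =
      Matrix.of fun k l => (blockTridiag n m A B C)⁻¹ (i, k) (j, l))
    {i j : ℕ} (hi : 1 ≤ i) (hin : i ≤ n) (hj : 1 ≤ j) (hjn : j ≤ n) :
    C (i - 1) * Z (i - 1) j + A i * Z i j + B i * Z (i + 1) j = if i = j then 1 else 0 := by
  set T := blockTridiag n m A B C
  let e := Matrix.compRingEquiv (Fin n) (Fin m) ℂ
  have hmul : e.symm T * e.symm T⁻¹ = 1 := by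
    rw [← map_mul, Matrix.mul_nonsing_inv _ ((Matrix.isUnit_iff_isUnit_det T).mp hT), map_one]
  have hcol : ∀ r : Fin n, e.symm T⁻¹ r ⟨j - 1, by omega⟩ = Z (r + 1) j := by
    intro r
    rw [show Z (r + 1) j = Z (r + 1) ((j - 1 : ℕ) + 1) by rw [Nat.sub_add_cancel hj],
      hZ r ⟨j - 1, by omega⟩]
    rfl
  have hentry := congrFun (congrFun hmul ⟨i - 1, by omega⟩) ⟨j - 1, by omega⟩
  rw [Matrix.mul_apply, Finset.sum_congr rfl fun r _ => congrArg _ (hcol r)] at hentry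
  rw [← blockTridiag_row_mul hC0 hBn (Z · j) hi hin, ← Matrix.compRingEquiv_symm_apply, hentry,
    Matrix.one_apply]
  exact if_congr (by rw [Fin.mk.injEq]; omega) rfl rfl

theorem norm_blockTridiag_inv_block_le {n m : ℕ} {A B C : ℕ → Matrix (Fin m) (Fin m) ℂ}
    (hC0 : C 0 = 0) (hBn : B n = 0) (hT : IsUnit (blockTridiag n m A B C))
    (hA : ∀ i, 1 ≤ i → i ≤ n → IsUnit (A i))
    {Z : ℕ → ℕ → Matrix (Fin m) (Fin m) ℂ}
    (hZ : ∀ i j : Fin n, Z ((i : ℕ) + 1) ((j : ℕ) + 1) =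
      Matrix.of fun k l => (blockTridiag n m A B C)⁻¹ (i, k) (j, l))
    {i j : ℕ} (hi : 1 ≤ i) (hin : i ≤ n) (hj : 1 ≤ j) (hjn : j ≤ n) (hij : i ≠ j) :
    ‖Z i j‖ ≤ ‖(A i)⁻¹ * C (i - 1)‖ * ‖Z (i - 1) j‖ + ‖(A i)⁻¹ * B i‖ * ‖Z (i + 1) j‖ := by
  refine norm_le_of_mul_add_mul_add_mul_eq_zero (hA i hi hin) ?_
  rw [blockTridiag_inv_block_row hC0 hBn hT hZ hi hin hj hjn, if_neg hij]

section Blocks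

variable {n m : ℕ} {A B C : ℕ → Matrix (Fin m) (Fin m) ℂ}

theorem rowDominant_blocks [Nonempty (Fin m)] (hC0 : C 0 = 0)
    (hB : ∀ i, 1 ≤ i → i ≤ n - 1 → IsUnit (B i)) (hA : ∀ i, 1 ≤ i → i ≤ n → IsUnit (A i))
    (hdom : ∀ i, 1 ≤ i → i ≤ n → ‖(A i)⁻¹ * C (i - 1)‖ + ‖(A i)⁻¹ * B i‖ ≤ 1) :
    RowDominant_s17 (fun i => ‖(A i)⁻¹ * C (i - 1)‖) (fun i => ‖(A i)⁻¹ * B i‖) (n - 1) where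
  c_nonneg _ := norm_nonneg _
  b_nonneg _ := norm_nonneg _
  c_one := by simp [hC0]
  add_le_one i hi _ := hdom i hi (by omega)
  b_pos i hi hin := norm_inv_mul_pos_s17 (hA i hi (by omega)) (hB i hi hin)

theorem rowDominant_blocks_reverse [Nonempty (Fin m)] (hBn : B n = 0)
    (hC : ∀ i, 1 ≤ i → i ≤ n - 1 → IsUnit (C i)) (hA : ∀ i, 1 ≤ i → i ≤ n → IsUnit (A i))
    (hdom : ∀ i, 1 ≤ i → i ≤ n → ‖(A i)⁻¹ * C (i - 1)‖ + ‖(A i)⁻¹ * B i‖ ≤ 1) :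
    RowDominant_s17 (fun i => ‖(A (n + 1 - i))⁻¹ * B (n + 1 - i)‖)
      (fun i => ‖(A (n + 1 - i))⁻¹ * C (n + 1 - i - 1)‖) (n - 1) where
  c_nonneg _ := norm_nonneg _
  b_nonneg _ := norm_nonneg _
  c_one := by simp [hBn]
  add_le_one i hi hin := (add_comm _ _).trans_le (hdom _ (by omega) (by omega))
  b_pos i hi hin := norm_inv_mul_pos_s17 (hA _ (by omega) (by omega)) (hC _ (by omega) (by omega))

theorem norm_blockTridiag_inv_upper_le [Nonempty (Fin m)] (hn : 2 ≤ n) (hC0 : C 0 = 0)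
    (hBn : B n = 0) (hT : IsUnit (blockTridiag n m A B C)) (hA : ∀ i, 1 ≤ i → i ≤ n → IsUnit (A i))
    (hdom : ∀ i, 1 ≤ i → i ≤ n → ‖(A i)⁻¹ * C (i - 1)‖ + ‖(A i)⁻¹ * B i‖ ≤ 1)
    {Z : ℕ → ℕ → Matrix (Fin m) (Fin m) ℂ}
    (hZ : ∀ i j : Fin n, Z ((i : ℕ) + 1) ((j : ℕ) + 1) =
      Matrix.of fun k l => (blockTridiag n m A B C)⁻¹ (i, k) (j, l))
    {t : ℕ} (ht : 1 ≤ t) (htn : t ≤ n - 1) {ρ : ℝ}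
    (hB : ∀ i, 1 ≤ i → i ≤ n - 1 → IsUnit (B i))
    {τ : ℕ → ℝ} (hτ : ∀ i, 1 ≤ i → i ≤ n → τ i = ‖(A i)⁻¹ * B i‖ / (1 - ‖(A i)⁻¹ * C (i - 1)‖))
    {τ' : ℕ → ℕ → ℝ} (hτ'1 : ∀ i, τ' i 1 = τ i)
    (hτ'a : ∀ i t, 1 ≤ i → i ≤ n → 2 ≤ t → t ≤ n - 1 → i < t → τ' i t = τ' i (t - 1))
    (hτ'b : ∀ i t, 1 ≤ i → i ≤ n → 2 ≤ t → t ≤ n - 1 → t ≤ i →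
      τ' i t = ‖(A i)⁻¹ * B i‖ / (1 - ‖(A i)⁻¹ * C (i - 1)‖ * τ' (i - 1) (t - 1)))
    (hρ : ∀ k, 1 ≤ k → k ≤ n → τ' k t ≤ ρ) {i j : ℕ} (hi : 1 ≤ i) (hij : i < j) (hjn : j ≤ n) :
    ‖Z i j‖ ≤ ρ ^ (j - i) * ‖Z j j‖ :=
  IsSweepRatio.le_pow_mul (z := fun i => ‖Z i j‖)
    ⟨fun i hi _ => by rw [hτ'1, hτ i hi (by omega)], fun i t hi _ => hτ'a i t hi (by omega),
      fun i t hi _ => hτ'b i t hi (by omega)⟩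
    (rowDominant_blocks hC0 hB hA hdom) (fun _ => norm_nonneg _) (by omega)
    (fun _ hk hkj => norm_blockTridiag_inv_block_le hC0 hBn hT hA hZ hk (by omega) (by omega) hjn
      (by omega))
    (by omega) ht htn (fun k hk _ => hρ k hk (by omega)) hi hij.le

theorem norm_blockTridiag_inv_lower_le [Nonempty (Fin m)] (hn : 2 ≤ n) (hC0 : C 0 = 0)
    (hBn : B n = 0) (hT : IsUnit (blockTridiag n m A B C)) (hA : ∀ i, 1 ≤ i → i ≤ n → IsUnit (A i))
    (hdom : ∀ i, 1 ≤ i → i ≤ n → ‖(A i)⁻¹ * C (i - 1)‖ + ‖(A i)⁻¹ * B i‖ ≤ 1)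
    {Z : ℕ → ℕ → Matrix (Fin m) (Fin m) ℂ}
    (hZ : ∀ i j : Fin n, Z ((i : ℕ) + 1) ((j : ℕ) + 1) =
      Matrix.of fun k l => (blockTridiag n m A B C)⁻¹ (i, k) (j, l))
    {t : ℕ} (ht : 1 ≤ t) (htn : t ≤ n - 1) {ρ : ℝ}
    (hC : ∀ i, 1 ≤ i → i ≤ n - 1 → IsUnit (C i))
    {ω : ℕ → ℝ} (hω : ∀ i, 1 ≤ i → i ≤ n → ω i = ‖(A i)⁻¹ * C (i - 1)‖ / (1 - ‖(A i)⁻¹ * B i‖))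
    {ω' : ℕ → ℕ → ℝ} (hω'1 : ∀ i, ω' i 1 = ω i)
    (hω'a : ∀ i t, 1 ≤ i → i ≤ n → 2 ≤ t → t ≤ n - 1 → n - t + 1 < i → ω' i t = ω' i (t - 1))
    (hω'b : ∀ i t, 1 ≤ i → i ≤ n → 2 ≤ t → t ≤ n - 1 → i ≤ n - t + 1 →
      ω' i t = ‖(A i)⁻¹ * C (i - 1)‖ / (1 - ‖(A i)⁻¹ * B i‖ * ω' (i + 1) (t - 1)))
    (hρ : ∀ k, 1 ≤ k → k ≤ n → ω' k t ≤ ρ) {i j : ℕ} (hj : 1 ≤ j) (hji : j < i) (hin : i ≤ n) :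
    ‖Z i j‖ ≤ ρ ^ (i - j) * ‖Z j j‖ := by
  have hsweep : IsSweepRatio (fun k => ‖(A (n + 1 - k))⁻¹ * B (n + 1 - k)‖)
      (fun k => ‖(A (n + 1 - k))⁻¹ * C (n + 1 - k - 1)‖) (n - 1) (n - 1)
      (fun k t => ω' (n + 1 - k) t) :=
    ⟨fun k hk _ => by rw [hω'1, hω _ (by omega) (by omega)],
      fun k t hk _ h2 ht hkt => hω'a _ t (by omega) (by omega) h2 ht (by omega),
      fun k t hk _ h2 ht htk => by
        rw [hω'b _ t (by omega) (by omega) h2 ht (by omega),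
          show n + 1 - (k - 1) = n + 1 - k + 1 by omega]⟩
  have hrow : ∀ k, 1 ≤ k → k < n + 1 - j → ‖Z (n + 1 - k) j‖ ≤
      ‖(A (n + 1 - k))⁻¹ * B (n + 1 - k)‖ * ‖Z (n + 1 - (k - 1)) j‖ +
        ‖(A (n + 1 - k))⁻¹ * C (n + 1 - k - 1)‖ * ‖Z (n + 1 - (k + 1)) j‖ := by
    intro k hk hkj
    rw [show n + 1 - (k - 1) = n + 1 - k + 1 by omega,
      show n + 1 - (k + 1) = n + 1 - k - 1 by omega]
    have hkj' : n + 1 - k ≠ j := by omega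
    exact (norm_blockTridiag_inv_block_le hC0 hBn hT hA hZ (by omega) (by omega) hj (by omega)
      hkj').trans_eq (add_comm _ _)
  have key := hsweep.le_pow_mul (rowDominant_blocks_reverse hBn hC hA hdom)
    (z := fun k => ‖Z (n + 1 - k) j‖) (fun _ => norm_nonneg _) (by omega) hrow (by omega) ht htn
    (fun k hk hkn => hρ _ (by omega) (by omega)) (i := n + 1 - i) (by omega) (by omega)
  rwa [show n + 1 - (n + 1 - i) = i by omega, show n + 1 - (n + 1 - j) = j by omega,
    show n + 1 - j - (n + 1 - i) = i - j by omega] at key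

end Blocks

theorem decay_bounds_rho
    (n m : ℕ) (hn : 2 ≤ n) (hm : 1 ≤ m)
    (A B C : ℕ → Matrix (Fin m) (Fin m) ℂ)
    (hC0 : C 0 = 0) (hBn : B n = 0)
    (hAinv : IsUnit (blockTridiag n m A B C))
    (hB : ∀ i, 1 ≤ i → i ≤ n - 1 → IsUnit (B i))
    (hC : ∀ i, 1 ≤ i → i ≤ n - 1 → IsUnit (C i))
    (hAi : ∀ i, 1 ≤ i → i ≤ n → IsUnit (A i))
    (hdom : ∀ i, 1 ≤ i → i ≤ n → ‖(A i)⁻¹ * C (i - 1)‖ + ‖(A i)⁻¹ * B i‖ ≤ 1)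
    (τ : ℕ → ℝ)
    (hτ : ∀ i, 1 ≤ i → i ≤ n → τ i = ‖(A i)⁻¹ * B i‖ / (1 - ‖(A i)⁻¹ * C (i - 1)‖))
    (ω : ℕ → ℝ)
    (hω : ∀ i, 1 ≤ i → i ≤ n → ω i = ‖(A i)⁻¹ * C (i - 1)‖ / (1 - ‖(A i)⁻¹ * B i‖))
    (τ' : ℕ → ℕ → ℝ)
    (hτ'1 : ∀ i, τ' i 1 = τ i)
    (hτ'a : ∀ i t, 1 ≤ i → i ≤ n → 2 ≤ t → t ≤ n - 1 → i < t → τ' i t = τ' i (t - 1))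
    (hτ'b : ∀ i t, 1 ≤ i → i ≤ n → 2 ≤ t → t ≤ n - 1 → t ≤ i →
      τ' i t = ‖(A i)⁻¹ * B i‖ / (1 - ‖(A i)⁻¹ * C (i - 1)‖ * τ' (i - 1) (t - 1)))
    (ω' : ℕ → ℕ → ℝ)
    (hω'1 : ∀ i, ω' i 1 = ω i)
    (hω'a : ∀ i t, 1 ≤ i → i ≤ n → 2 ≤ t → t ≤ n - 1 → n - t + 1 < i → ω' i t = ω' i (t - 1))
    (hω'b : ∀ i t, 1 ≤ i → i ≤ n → 2 ≤ t → t ≤ n - 1 → i ≤ n - t + 1 →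
      ω' i t = ‖(A i)⁻¹ * C (i - 1)‖ / (1 - ‖(A i)⁻¹ * B i‖ * ω' (i + 1) (t - 1)))
    (Z : ℕ → ℕ → Matrix (Fin m) (Fin m) ℂ)
    (hZ : ∀ i j : Fin n, Z ((i : ℕ) + 1) ((j : ℕ) + 1) =
      Matrix.of fun k l => (blockTridiag n m A B C)⁻¹ (i, k) (j, l)) :
    ∀ t, 1 ≤ t → t ≤ n - 1 →
      (∀ i j, 1 ≤ i → i < j → j ≤ n →
        ‖Z i j‖ ≤ ((Finset.Icc 1 n).sup' (Finset.nonempty_Icc.mpr (by omega)) fun k => τ' k t) ^ (j - i) * ‖Z j j‖) ∧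
      (∀ i j, 1 ≤ j → j < i → i ≤ n →
        ‖Z i j‖ ≤ ((Finset.Icc 1 n).sup' (Finset.nonempty_Icc.mpr (by omega)) fun k => ω' k t) ^ (i - j) * ‖Z j j‖) := by
  have : Nonempty (Fin m) := ⟨⟨0, hm⟩⟩
  intro t ht htn
  refine ⟨fun i j hi hij hjn => ?_, fun i j hj hji hin => ?_⟩
  · exact norm_blockTridiag_inv_upper_le hn hC0 hBn hAinv hAi hdom hZ ht htn hB hτ hτ'1 hτ'a hτ'b
      (fun k hk hkn => Finset.le_sup' (fun k => τ' k t) (Finset.mem_Icc.mpr ⟨hk, hkn⟩)) hi hij hjn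
  · exact norm_blockTridiag_inv_lower_le hn hC0 hBn hAinv hAi hdom hZ ht htn hC hω hω'1 hω'a hω'b
      (fun k hk hkn => Finset.le_sup' (fun k => ω' k t) (Finset.mem_Icc.mpr ⟨hk, hkn⟩)) hj hji hin
end

section
/- If an n×n block matrix A = [A_{ij}] with blocks A_{ij} ∈ ℂ^{m×m} is row block strictly diagonally dominant, i.e. every diagonal block A_{ii} is invertible and ∑_{j≠i} ‖A_{ii}⁻¹A_{ij}‖ < 1 for each i = 1,…,n, then A is nonsingular (invertible as an nm×nm complex matrix). -/
/-!
If `A x = 0`, write `x` in blocks `x_j` and pick `i` with `‖x_i‖` maximal. Solving the `i`-th block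
row for `x_i` gives `x_i = -∑_{j ≠ i} A_ii⁻¹ A_ij x_j`, so
`‖x_i‖ ≤ (∑_{j ≠ i} ‖A_ii⁻¹ A_ij‖) ‖x_i‖` with a factor `< 1`; hence `x_i = 0`, and then every block
vanishes. So the kernel of `A` is trivial.
-/

open scoped Matrix
attribute [local instance] Matrix.linftyOpNormedRing

/-- The `n × n` block matrix with `m × m` blocks `A i j`. -/
noncomputable def blockMat (n m : ℕ) (A : Fin n → Fin n → Matrix (Fin m) (Fin m) ℂ) :
    Matrix (Fin n × Fin m) (Fin n × Fin m) ℂ :=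
  Matrix.of fun p q => A p.1 q.1 p.2 q.2

open Finset

theorem eq_zero_of_le_sum_erase_mul {ι : Type*} [Fintype ι] [DecidableEq ι] (c : ι → ι → ℝ)
    (hc : ∀ i j, 0 ≤ c i j) (hsum : ∀ i, ∑ j ∈ univ.erase i, c i j < 1)
    (x : ι → ℝ) (hx : 0 ≤ x) (hle : ∀ i, x i ≤ ∑ j ∈ univ.erase i, c i j * x j) :
    x = 0 := by
  funext i
  obtain ⟨k, -, hmax⟩ := exists_max_image univ x ⟨i, mem_univ i⟩
  have hk : x k ≤ (∑ j ∈ univ.erase k, c k j) * x k :=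
    calc x k ≤ ∑ j ∈ univ.erase k, c k j * x j := hle k
      _ ≤ ∑ j ∈ univ.erase k, c k j * x k :=
        sum_le_sum fun j _ => mul_le_mul_of_nonneg_left (hmax j (mem_univ j)) (hc k j)
      _ = (∑ j ∈ univ.erase k, c k j) * x k := (sum_mul _ _ _).symm
  have hk0 : x k ≤ 0 := by nlinarith [hsum k, hx k]
  exact le_antisymm ((hmax i (mem_univ i)).trans hk0) (hx i)

theorem blockMat_mulVec_curry {n m : ℕ} (A : Fin n → Fin n → Matrix (Fin m) (Fin m) ℂ)
    (x : Fin n × Fin m → ℂ) (i : Fin n) :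
    Function.curry (blockMat n m A *ᵥ x) i = ∑ j, A i j *ᵥ Function.curry x j := by
  funext k
  simp only [Function.curry_apply, Matrix.mulVec, dotProduct, blockMat, Matrix.of_apply,
    Fintype.sum_prod_type, Finset.sum_apply]

theorem eq_neg_sum_erase_of_sum_mulVec_eq_zero {ι κ R : Type*} [Fintype ι] [DecidableEq ι]
    [Fintype κ] [DecidableEq κ] [CommRing R] (A : ι → ι → Matrix κ κ R) (v : ι → κ → R) (i : ι)
    (hA : IsUnit (A i i)) (hrow : ∑ j, A i j *ᵥ v j = 0) :
    v i = -∑ j ∈ univ.erase i, ((A i i)⁻¹ * A i j) *ᵥ v j := by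
  have hdiag : A i i *ᵥ v i = -∑ j ∈ univ.erase i, A i j *ᵥ v j := by
    rw [← add_sum_erase _ _ (mem_univ i)] at hrow
    exact eq_neg_of_add_eq_zero_left hrow
  calc v i = ((A i i)⁻¹ * A i i) *ᵥ v i := by
        rw [Matrix.nonsing_inv_mul _ ((Matrix.isUnit_iff_isUnit_det _).1 hA), Matrix.one_mulVec]
    _ = (A i i)⁻¹ *ᵥ (A i i *ᵥ v i) := (Matrix.mulVec_mulVec _ _ _).symm
    _ = -∑ j ∈ univ.erase i, ((A i i)⁻¹ * A i j) *ᵥ v j := by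
        simp only [hdiag, Matrix.mulVec_neg, Matrix.mulVec_sum, Matrix.mulVec_mulVec]

theorem blockStrictDiagDominant_isUnit_general
    (n m : ℕ)
    (A : Fin n → Fin n → Matrix (Fin m) (Fin m) ℂ)
    (hdiag : ∀ i, IsUnit (A i i))
    (hdom : ∀ i, ∑ j ∈ Finset.univ.erase i, ‖(A i i)⁻¹ * A i j‖ < 1) :
    IsUnit (blockMat n m A) := by
  rw [Matrix.isUnit_iff_isUnit_det, isUnit_iff_ne_zero]
  intro hdet
  obtain ⟨x, hx0, hx⟩ := Matrix.exists_mulVec_eq_zero_iff.2 hdet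
  set v := Function.curry x
  have hbound : ∀ i, ‖v i‖ ≤ ∑ j ∈ univ.erase i, ‖(A i i)⁻¹ * A i j‖ * ‖v j‖ := by
    intro i
    have hrow : ∑ j, A i j *ᵥ v j = 0 := by rw [← blockMat_mulVec_curry, hx]; rfl
    calc ‖v i‖ = ‖∑ j ∈ univ.erase i, ((A i i)⁻¹ * A i j) *ᵥ v j‖ := by
          rw [eq_neg_sum_erase_of_sum_mulVec_eq_zero A v i (hdiag i) hrow, norm_neg]
      _ ≤ ∑ j ∈ univ.erase i, ‖((A i i)⁻¹ * A i j) *ᵥ v j‖ := norm_sum_le _ _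
      _ ≤ ∑ j ∈ univ.erase i, ‖(A i i)⁻¹ * A i j‖ * ‖v j‖ :=
          sum_le_sum fun j _ => Matrix.linfty_opNorm_mulVec _ _
  have hv : (fun i => ‖v i‖) = 0 :=
    eq_zero_of_le_sum_erase_mul _ (fun _ _ => norm_nonneg _) hdom _ (fun _ => norm_nonneg _) hbound
  exact hx0 (funext fun p => congrFun (norm_eq_zero.1 (congrFun hv p.1)) p.2)

/-- A row block strictly diagonally dominant matrix is nonsingular. -/
theorem blockStrictDiagDominant_isUnit
    (n m : ℕ) (hn : 1 ≤ n) (hm : 1 ≤ m)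
    (A : Fin n → Fin n → Matrix (Fin m) (Fin m) ℂ)
    (hdiag : ∀ i, IsUnit (A i i))
    (hdom : ∀ i, ∑ j ∈ Finset.univ.erase i, ‖(A i i)⁻¹ * A i j‖ < 1) :
    IsUnit (blockMat n m A) :=
  blockStrictDiagDominant_isUnit_general n m A hdiag hdom
end

section
/- Let A = [A_{ij}] be an n×n block matrix with blocks A_{ij} ∈ ℂ^{m×m}, and let λ ∈ ℂ be an eigenvalue of A (viewed as an nm×nm complex matrix). Then there exists at least one index i ∈ {1,…,n} such that either the block A_{ii} − λI is not invertible, or ∑_{j≠i} ‖(A_{ii} − λI)⁻¹A_{ij}‖ ≥ 1. (Block Gershgorin theorem: every eigenvalue lies in the union of the sets G_i = {z ∈ ℂ : A_{ii} − zI is singular, or ∑_{j≠i} ‖(A_{ii} − zI)⁻¹A_{ij}‖ ≥ 1}.) -/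
/-!
Write an eigenvector as blocks `y i` and pick `i` with `‖y i‖` maximal (sup norms throughout).
If `B = A i i - λ I` is invertible, the `i`-th block row of `A y = λ y` gives
`y i = -∑_{j ≠ i} (B⁻¹ A i j) y j`, so `‖y i‖ ≤ (∑_{j ≠ i} ‖B⁻¹ A i j‖) ‖y i‖`,
and `‖y i‖ > 0` forces the sum to be at least `1`.
-/

open scoped Matrix
attribute [local instance] Matrix.linftyOpNormedRing

open Finset

section Algebra

variable {R ι α : Type*} [CommRing R] [Fintype α] [DecidableEq α]

theorem sub_smul_one_mulVec_eq_neg_sum_erase [Fintype ι] [DecidableEq ι]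
    {A : ι → ι → Matrix α α R} {lam : R} {y : ι → α → R} (i : ι)
    (hrow : ∑ j, A i j *ᵥ y j = lam • y i) :
    (A i i - lam • 1) *ᵥ y i = -∑ j ∈ univ.erase i, A i j *ᵥ y j := by
  rw [Matrix.sub_mulVec, Matrix.smul_mulVec, Matrix.one_mulVec, ← hrow,
    ← add_sum_erase _ _ (mem_univ i)]
  abel

theorem eq_neg_sum_inv_mul_mulVec {s : Finset ι} {B : Matrix α α R} (hB : IsUnit B)
    {C : ι → Matrix α α R} {v : α → R} {w : ι → α → R}
    (h : B *ᵥ v = -∑ j ∈ s, C j *ᵥ w j) :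
    v = -∑ j ∈ s, (B⁻¹ * C j) *ᵥ w j := by
  have hBinv : B⁻¹ * B = 1 := Matrix.nonsing_inv_mul B (B.isUnit_iff_isUnit_det.mp hB)
  calc v = B⁻¹ *ᵥ (B *ᵥ v) := by rw [Matrix.mulVec_mulVec, hBinv, Matrix.one_mulVec]
    _ = -∑ j ∈ s, (B⁻¹ * C j) *ᵥ w j := by
      simp only [h, Matrix.mulVec_neg, Matrix.mulVec_sum, Matrix.mulVec_mulVec]

end Algebra

section Norm

variable {𝕜 ι α : Type*} [NormedCommRing 𝕜] [Fintype α] [DecidableEq α]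

theorem one_le_sum_norm_of_eq_neg_sum_mulVec {s : Finset ι} {M : ι → Matrix α α 𝕜}
    {v : α → 𝕜} {w : ι → α → 𝕜} (hv : v ≠ 0) (hw : ∀ j ∈ s, ‖w j‖ ≤ ‖v‖)
    (h : v = -∑ j ∈ s, M j *ᵥ w j) :
    1 ≤ ∑ j ∈ s, ‖M j‖ := by
  have hle : 1 * ‖v‖ ≤ (∑ j ∈ s, ‖M j‖) * ‖v‖ :=
    calc 1 * ‖v‖ = ‖∑ j ∈ s, M j *ᵥ w j‖ := by rw [one_mul, h, norm_neg]
      _ ≤ ∑ j ∈ s, ‖M j *ᵥ w j‖ := norm_sum_le _ _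
      _ ≤ ∑ j ∈ s, ‖M j‖ * ‖v‖ := sum_le_sum fun j hj =>
          (Matrix.linfty_opNorm_mulVec _ _).trans
            (mul_le_mul_of_nonneg_left (hw j hj) (norm_nonneg _))
      _ = (∑ j ∈ s, ‖M j‖) * ‖v‖ := by rw [sum_mul]
  exact le_of_mul_le_mul_right hle (norm_pos_iff.mpr hv)

theorem exists_not_isUnit_or_one_le_sum_norm_of_block_eigen [Fintype ι] [DecidableEq ι]
    (A : ι → ι → Matrix α α 𝕜) (lam : 𝕜) (y : ι → α → 𝕜) (hy : y ≠ 0)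
    (heig : ∀ i, ∑ j, A i j *ᵥ y j = lam • y i) :
    ∃ i, ¬ IsUnit (A i i - lam • 1) ∨
      1 ≤ ∑ j ∈ univ.erase i, ‖(A i i - lam • 1)⁻¹ * A i j‖ := by
  obtain ⟨i₀, hi₀⟩ := Function.ne_iff.mp hy
  obtain ⟨i, -, hmax⟩ := exists_max_image univ (fun j => ‖y j‖) ⟨i₀, mem_univ _⟩
  refine ⟨i, or_iff_not_imp_left.mpr fun hB => ?_⟩
  have hyi : y i ≠ 0 :=
    norm_pos_iff.mp <| (norm_pos_iff.mpr hi₀).trans_le (hmax i₀ (mem_univ _))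
  exact one_le_sum_norm_of_eq_neg_sum_mulVec hyi (fun j _ => hmax j (mem_univ _))
    (eq_neg_sum_inv_mul_mulVec (not_not.mp hB)
      (sub_smul_one_mulVec_eq_neg_sum_erase i (heig i)))

end Norm

theorem block_gershgorin_general
    (n m : ℕ)
    (A : Fin n → Fin n → Matrix (Fin m) (Fin m) ℂ) (lam : ℂ)
    (hev : ∃ x : Fin n × Fin m → ℂ, x ≠ 0 ∧ (blockMat n m A).mulVec x = lam • x) :
    ∃ i, ¬ IsUnit (A i i - lam • (1 : Matrix (Fin m) (Fin m) ℂ)) ∨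
      1 ≤ ∑ j ∈ Finset.univ.erase i,
        ‖(A i i - lam • (1 : Matrix (Fin m) (Fin m) ℂ))⁻¹ * A i j‖ := by
  obtain ⟨x, hx, heq⟩ := hev
  refine exists_not_isUnit_or_one_le_sum_norm_of_block_eigen A lam (Function.curry x)
    (Function.curry_injective.ne hx) fun i => ?_
  rw [← blockMat_mulVec_curry, heq]
  rfl

/-- Block Gershgorin theorem: every eigenvalue of a block matrix lies in the union of the
block Gershgorin sets. -/
theorem block_gershgorin
    (n m : ℕ) (hn : 1 ≤ n) (hm : 1 ≤ m)
    (A : Fin n → Fin n → Matrix (Fin m) (Fin m) ℂ) (lam : ℂ)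
    (hev : ∃ x : Fin n × Fin m → ℂ, x ≠ 0 ∧ (blockMat n m A).mulVec x = lam • x) :
    ∃ i, ¬ IsUnit (A i i - lam • (1 : Matrix (Fin m) (Fin m) ℂ)) ∨
      1 ≤ ∑ j ∈ Finset.univ.erase i,
        ‖(A i i - lam • (1 : Matrix (Fin m) (Fin m) ℂ))⁻¹ * A i j‖ :=
  block_gershgorin_general n m A lam hev
end
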